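/- Thompson's quandle P is isomorphic to the quandle Q presented by two generators a, b and the two relations a ▷ (a ▷ b) = b ▷ (a ▷ b) and a ▷ (a ▷ (a ▷ b)) = b ▷ (a ▷ (a ▷ b)). In particular, P is finitely presented. -/

import Mathlib

open Quandles

universe u v w

/-- `(P, p)` is a model of the quandle presented by generators `p 0, p 1, p 2, …` and
relations `p j ◃ p k = p (k+1)` for all `j < k` (Thompson's quandle): the relations hold
and the universal property of the presentation is satisfied. -/
structure IsThompsonQuandle (P : Type v) [Quandle P] (p : ℕ → P) : Prop where
  rel : ∀ ⦃j k : ℕ⦄, j < k → p j ◃ p k = p (k + 1)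
  lift : ∀ (Q : Type u) [Quandle Q] (q : ℕ → Q),
    (∀ ⦃j k : ℕ⦄, j < k → q j ◃ q k = q (k + 1)) →
    ∃! f : P →◃ Q, ∀ n, f (p n) = q n

/-- `(Q, a, b)` is a model of the quandle presented by two generators `a, b` and the two
relations `a ◃ (a ◃ b) = b ◃ (a ◃ b)` and `a ◃ (a ◃ (a ◃ b)) = b ◃ (a ◃ (a ◃ b))`. -/
structure IsFinThompsonQuandle (Q : Type w) [Quandle Q] (a b : Q) : Prop where
  rel1 : a ◃ (a ◃ b) = b ◃ (a ◃ b)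
  rel2 : a ◃ (a ◃ (a ◃ b)) = b ◃ (a ◃ (a ◃ b))
  lift : ∀ (R : Type u) [Quandle R] (x y : R),
    x ◃ (x ◃ y) = y ◃ (x ◃ y) → x ◃ (x ◃ (x ◃ y)) = y ◃ (x ◃ (x ◃ y)) →
    ∃! f : Q →◃ R, f a = x ∧ f b = y

/-!
The sequence `q = (a, b, a ◃ b, a ◃ (a ◃ b), …)` in `Q` satisfies all of Thompson's relations
`q j ◃ q k = q (k + 1)`, by induction on `k`: for `j = 0` this is the definition of `q`, the
relation for `(j + 2, k + 1)` follows from the one for `(j + 1, k)` by applying `q 0 ◃ -`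
and self-distributivity, and the relations for `(1, 2)` and `(1, 3)` are the two defining
relations of `Q`, from which the ones for `(1, k)` with `k ≥ 4` follow in the same way.
Conversely `p 0, p 1` satisfy the two relations in `P` and generate it, so the universal
properties give mutually inverse homomorphisms `P → Q` and `Q → P`.
-/

theorem Shelf.act_act_eq_act_act_of_act_eq {S : Type*} [Shelf S] {x y z : S}
    (h : y ◃ z = x ◃ z) : x ◃ (x ◃ z) = (x ◃ y) ◃ (x ◃ z) :=
  (congrArg (x ◃ ·) h).symm.trans Shelf.self_distrib

section ThompsonSeq

variable {S : Type*} [Shelf S]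

def IsThompsonSeq (q : ℕ → S) : Prop :=
  ∀ ⦃j k : ℕ⦄, j < k → q j ◃ q k = q (k + 1)

def thompsonSeq (x y : S) : ℕ → S
  | 0 => x
  | 1 => y
  | n + 2 => x ◃ thompsonSeq x y (n + 1)

variable (x y : S)

theorem thompsonSeq_succ_succ_act_of_act
    {m n : ℕ} (h : thompsonSeq x y (m + 1) ◃ thompsonSeq x y (n + 1) = thompsonSeq x y (n + 2)) :
    thompsonSeq x y (m + 2) ◃ thompsonSeq x y (n + 2) = thompsonSeq x y (n + 3) :=
  (Shelf.act_act_eq_act_act_of_act_eq h).symm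

theorem thompsonSeq_one_act_of_act
    (h₁₂ : thompsonSeq x y 1 ◃ thompsonSeq x y 2 = thompsonSeq x y 3) {n : ℕ}
    (h₁ₙ : thompsonSeq x y 1 ◃ thompsonSeq x y (n + 3) = thompsonSeq x y (n + 4))
    (h₂ₙ : thompsonSeq x y 2 ◃ thompsonSeq x y (n + 3) = thompsonSeq x y (n + 4)) :
    thompsonSeq x y 1 ◃ thompsonSeq x y (n + 4) = thompsonSeq x y (n + 5) := by
  have h₁₃ := Shelf.act_act_eq_act_act_of_act_eq (h₂ₙ.trans h₁ₙ.symm)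
  rw [h₁ₙ, h₁₂] at h₁₃
  exact h₁₃.trans (thompsonSeq_succ_succ_act_of_act x y h₂ₙ)

theorem isThompsonSeq_thompsonSeq_iff :
    IsThompsonSeq (thompsonSeq x y) ↔
      x ◃ (x ◃ y) = y ◃ (x ◃ y) ∧ x ◃ (x ◃ (x ◃ y)) = y ◃ (x ◃ (x ◃ y)) := by
  refine ⟨fun h => ⟨(h (j := 1) (k := 2) (by decide)).symm,
    (h (j := 1) (k := 3) (by decide)).symm⟩, fun ⟨h₁, h₂⟩ => ?_⟩
  intro j k hjk
  induction k generalizing j with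
  | zero => omega
  | succ k ih =>
    match j, k with
    | 0, k => rfl
    | 1, 1 => exact h₁.symm
    | 1, 2 => exact h₂.symm
    | 1, n + 3 =>
      exact thompsonSeq_one_act_of_act x y h₁.symm (ih (j := 1) (by omega)) (ih (j := 2) (by omega))
    | _ + 2, 0 => omega
    | j + 2, k + 1 => exact thompsonSeq_succ_succ_act_of_act x y (ih (j := j + 1) (by omega))

theorem IsThompsonSeq.thompsonSeq_eq {p : ℕ → S} (hp : IsThompsonSeq p) :
    thompsonSeq (p 0) (p 1) = p := by
  funext n
  induction n with
  | zero => rfl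
  | succ n ih =>
    match n with
    | 0 => rfl
    | n + 1 => exact (congrArg (p 0 ◃ ·) ih).trans (hp n.succ_pos)

theorem IsThompsonSeq.map {T : Type*} [Shelf T] (f : S →◃ T) {p : ℕ → S}
    (hp : IsThompsonSeq p) : IsThompsonSeq (f ∘ p) := fun _ _ hjk => by
  simp only [Function.comp_apply, ← ShelfHom.map_act, hp hjk]

theorem ShelfHom.map_thompsonSeq {T : Type*} [Shelf T] (f : S →◃ T) (n : ℕ) :
    f (thompsonSeq x y n) = thompsonSeq (f x) (f y) n := by
  induction n using Nat.strong_induction_on with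
  | _ n ih =>
    match n with
    | 0 => rfl
    | 1 => rfl
    | n + 2 => simp only [thompsonSeq, map_act, ih (n + 1) (by omega)]

end ThompsonSeq

theorem IsThompsonQuandle.hom_ext {P : Type v} [Quandle P] {p : ℕ → P}
    (hP : IsThompsonQuandle.{u, v} P p) {Q : Type u} [Quandle Q] {f g : P →◃ Q}
    (h : ∀ n, f (p n) = g (p n)) : f = g :=
  (hP.lift Q (f ∘ p) (IsThompsonSeq.map f hP.rel)).unique (fun _ => rfl) fun n => (h n).symm

theorem IsFinThompsonQuandle.hom_ext {Q : Type w} [Quandle Q] {a b : Q}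
    (hQ : IsFinThompsonQuandle.{u, w} Q a b) {R : Type u} [Quandle R] {f g : Q →◃ R}
    (ha : f a = g a) (hb : f b = g b) : f = g := by
  have rel1 : f a ◃ (f a ◃ f b) = f b ◃ (f a ◃ f b) := by simp only [← f.map_act, hQ.rel1]
  have rel2 : f a ◃ (f a ◃ (f a ◃ f b)) = f b ◃ (f a ◃ (f a ◃ f b)) := by
    simp only [← f.map_act, hQ.rel2]
  exact (hQ.lift R (f a) (f b) rel1 rel2).unique ⟨rfl, rfl⟩ ⟨ha.symm, hb.symm⟩

/-- Thompson's quandle `P` is isomorphic to the quandle `Q` presented by two generators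
`a, b` and the two relations `a ◃ (a ◃ b) = b ◃ (a ◃ b)` and
`a ◃ (a ◃ (a ◃ b)) = b ◃ (a ◃ (a ◃ b))`; in particular, `P` is finitely presented. -/
theorem thompson_finitely_presented {P : Type v} [Quandle P] {p : ℕ → P}
    (hP : IsThompsonQuandle.{v, v} P p)
    {Q : Type v} [Quandle Q] {a b : Q} (hQ : IsFinThompsonQuandle.{v, v} Q a b) :
    ∃ e : P ≃ Q, (∀ x y : P, e (x ◃ y) = e x ◃ e y) ∧ e (p 0) = a ∧ e (p 1) = b := by
  have hq : IsThompsonSeq (thompsonSeq a b) :=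
    (isThompsonSeq_thompsonSeq_iff a b).mpr ⟨hQ.rel1, hQ.rel2⟩
  obtain ⟨f, hf, -⟩ := hP.lift Q _ hq
  have hrel : IsThompsonSeq p := hP.rel
  have hp : IsThompsonSeq (thompsonSeq (p 0) (p 1)) := hrel.thompsonSeq_eq ▸ hrel
  obtain ⟨h₁, h₂⟩ := (isThompsonSeq_thompsonSeq_iff (p 0) (p 1)).mp hp
  obtain ⟨g, ⟨hga, hgb⟩, -⟩ := hQ.lift P (p 0) (p 1) h₁ h₂
  have hgf : g.comp f = ShelfHom.id P := hP.hom_ext fun n => by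
    rw [ShelfHom.comp_apply, hf, ShelfHom.map_thompsonSeq, hga, hgb, hrel.thompsonSeq_eq]
    rfl
  have hfg : f.comp g = ShelfHom.id Q :=
    hQ.hom_ext (by rw [ShelfHom.comp_apply, hga, hf]; rfl)
      (by rw [ShelfHom.comp_apply, hgb, hf]; rfl)
  exact ⟨⟨f, g, DFunLike.congr_fun hgf, DFunLike.congr_fun hfg⟩,
    fun _ _ => f.map_act, hf 0, hf 1⟩
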